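/- arXiv:1403.2546 — 8 statements merged into one kernel-verified Lean document; each statement's English description precedes it below -/
import Mathlib

section
/- Let D be a nonempty closed convex subset of a Banach space B and T : D → D a contraction with constant δ ∈ (0,1) and fixed point x*. Let {x_n} be the Picard-S iteration: x_{n+1} = T y_n, y_n = (1-η_n^1)T x_n + η_n^1 T z_n, z_n = (1-η_n^2)x_n + η_n^2 T x_n, with η_n^1, η_n^2 ∈ [0,1]. Then ‖x_{n+1} - x*‖ ≤ δ²[1 - η_n^1 η_n^2 (1-δ)]·‖x_n - x*‖ for all n. -/
open Filter Topology


theorem picardS_step_estimate {E : Type*} [NormedAddCommGroup E] [NormedSpace ℝ E] [CompleteSpace E]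
    (D : Set E) (hDne : D.Nonempty) (hDcl : IsClosed D) (hDcv : Convex ℝ D)
    (T : E → E) (hTD : Set.MapsTo T D D)
    (δ : ℝ) (hδ : δ ∈ Set.Ioo (0:ℝ) 1)
    (hcontr : ∀ x ∈ D, ∀ y ∈ D, ‖T x - T y‖ ≤ δ * ‖x - y‖)
    (xstar : E) (hxsD : xstar ∈ D) (hfix : T xstar = xstar)
    (η1 η2 : ℕ → ℝ) (hη1 : ∀ n, η1 n ∈ Set.Icc (0:ℝ) 1) (hη2 : ∀ n, η2 n ∈ Set.Icc (0:ℝ) 1)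
    (x y z : ℕ → E) (hx0 : x 0 ∈ D)
    (hz : ∀ n, z n = (1 - η2 n) • x n + η2 n • T (x n))
    (hy : ∀ n, y n = (1 - η1 n) • T (x n) + η1 n • T (z n))
    (hxrec : ∀ n, x (n + 1) = T (y n)) :
    ∀ n, ‖x (n + 1) - xstar‖ ≤ δ ^ 2 * (1 - η1 n * η2 n * (1 - δ)) * ‖x n - xstar‖ := by
  obtain ⟨hδ0, hδ1⟩ := hδ
  -- membership in D
  have hzD : ∀ n, x n ∈ D → z n ∈ D := by
    intro n hxn
    rw [hz n]
    exact hDcv hxn (hTD hxn) (by linarith [(hη2 n).2]) (hη2 n).1 (by ring)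
  have hyD : ∀ n, x n ∈ D → y n ∈ D := by
    intro n hxn
    rw [hy n]
    exact hDcv (hTD hxn) (hTD (hzD n hxn)) (by linarith [(hη1 n).2]) (hη1 n).1 (by ring)
  have hxD : ∀ n, x n ∈ D := by
    intro n
    induction n with
    | zero => exact hx0
    | succ k ih => rw [hxrec k]; exact hTD (hyD k ih)
  intro n
  obtain ⟨h10, h11⟩ := hη1 n
  obtain ⟨h20, h21⟩ := hη2 n
  have hTx : ‖T (x n) - xstar‖ ≤ δ * ‖x n - xstar‖ := by
    have h := hcontr _ (hxD n) _ hxsD; rwa [hfix] at h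
  have hznorm : ‖z n - xstar‖ ≤ (1 - η2 n * (1 - δ)) * ‖x n - xstar‖ := by
    have : z n - xstar = (1 - η2 n) • (x n - xstar) + η2 n • (T (x n) - xstar) := by
      rw [hz n]; module
    rw [this]
    calc ‖(1 - η2 n) • (x n - xstar) + η2 n • (T (x n) - xstar)‖
        ≤ ‖(1 - η2 n) • (x n - xstar)‖ + ‖η2 n • (T (x n) - xstar)‖ := norm_add_le _ _
      _ = (1 - η2 n) * ‖x n - xstar‖ + η2 n * ‖T (x n) - xstar‖ := by
          rw [norm_smul, norm_smul, Real.norm_of_nonneg (by linarith), Real.norm_of_nonneg h20]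
      _ ≤ (1 - η2 n) * ‖x n - xstar‖ + η2 n * (δ * ‖x n - xstar‖) := by
          gcongr
      _ = (1 - η2 n * (1 - δ)) * ‖x n - xstar‖ := by ring
  have hTz : ‖T (z n) - xstar‖ ≤ δ * ‖z n - xstar‖ := by
    have h := hcontr _ (hzD n (hxD n)) _ hxsD; rwa [hfix] at h
  have hynorm : ‖y n - xstar‖ ≤ δ * (1 - η1 n * η2 n * (1 - δ)) * ‖x n - xstar‖ := by
    have : y n - xstar = (1 - η1 n) • (T (x n) - xstar) + η1 n • (T (z n) - xstar) := by
      rw [hy n]; module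
    rw [this]
    calc ‖(1 - η1 n) • (T (x n) - xstar) + η1 n • (T (z n) - xstar)‖
        ≤ (1 - η1 n) * ‖T (x n) - xstar‖ + η1 n * ‖T (z n) - xstar‖ := by
          refine (norm_add_le _ _).trans_eq ?_
          rw [norm_smul, norm_smul, Real.norm_of_nonneg (by linarith), Real.norm_of_nonneg h10]
      _ ≤ (1 - η1 n) * (δ * ‖x n - xstar‖) + η1 n * (δ * ((1 - η2 n * (1 - δ)) * ‖x n - xstar‖)) := by
          have h2 : ‖T (z n) - xstar‖ ≤ δ * ((1 - η2 n * (1 - δ)) * ‖x n - xstar‖) :=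
            hTz.trans (by nlinarith [hznorm])
          have := mul_le_mul_of_nonneg_left hTx (by linarith : (0:ℝ) ≤ 1 - η1 n)
          have := mul_le_mul_of_nonneg_left h2 h10
          linarith
      _ = δ * (1 - η1 n * η2 n * (1 - δ)) * ‖x n - xstar‖ := by ring
  calc ‖x (n + 1) - xstar‖ = ‖T (y n) - T xstar‖ := by rw [hxrec n, hfix]
    _ ≤ δ * ‖y n - xstar‖ := hcontr _ (hyD n (hxD n)) _ hxsD
    _ ≤ δ * (δ * (1 - η1 n * η2 n * (1 - δ)) * ‖x n - xstar‖) := by gcongr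
    _ = δ ^ 2 * (1 - η1 n * η2 n * (1 - δ)) * ‖x n - xstar‖ := by ring
end

section
/- Let D be a nonempty closed convex subset of a Banach space B and T : D → D a contraction with constant δ ∈ (0,1) and fixed point x*. Let {x_n} be the Picard-S iteration with sequences η_n^1, η_n^2 ∈ [0,1]. Then for all n, ‖x_{n+1} - x*‖ ≤ ‖x_0 - x*‖ · δ^{2(n+1)} · ∏_{k=0}^{n} [1 - η_k^1 η_k^2 (1-δ)]. -/
open Filter Topology


theorem picardS_apriori_estimate {E : Type*} [NormedAddCommGroup E] [NormedSpace ℝ E] [CompleteSpace E]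
    (D : Set E) (hDne : D.Nonempty) (hDcl : IsClosed D) (hDcv : Convex ℝ D)
    (T : E → E) (hTD : Set.MapsTo T D D)
    (δ : ℝ) (hδ : δ ∈ Set.Ioo (0:ℝ) 1)
    (hcontr : ∀ x ∈ D, ∀ y ∈ D, ‖T x - T y‖ ≤ δ * ‖x - y‖)
    (xstar : E) (hxsD : xstar ∈ D) (hfix : T xstar = xstar)
    (η1 η2 : ℕ → ℝ) (hη1 : ∀ n, η1 n ∈ Set.Icc (0:ℝ) 1) (hη2 : ∀ n, η2 n ∈ Set.Icc (0:ℝ) 1)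
    (x y z : ℕ → E) (hx0 : x 0 ∈ D)
    (hz : ∀ n, z n = (1 - η2 n) • x n + η2 n • T (x n))
    (hy : ∀ n, y n = (1 - η1 n) • T (x n) + η1 n • T (z n))
    (hxrec : ∀ n, x (n + 1) = T (y n)) :
    ∀ n, ‖x (n + 1) - xstar‖ ≤
      ‖x 0 - xstar‖ * δ ^ (2 * (n + 1)) *
        ∏ k ∈ Finset.range (n + 1), (1 - η1 k * η2 k * (1 - δ)) := by
  obtain ⟨hδ0, hδ1⟩ := hδ
  -- membership
  have hxD : ∀ n, x n ∈ D := by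
    intro n
    induction n with
    | zero => exact hx0
    | succ n ih =>
      rw [hxrec]
      apply hTD
      rw [hy]
      refine hDcv (hTD ih) (hTD ?_) (by linarith [(hη1 n).2]) (hη1 n).1 (by ring)
      rw [hz]
      exact hDcv ih (hTD ih) (by linarith [(hη2 n).2]) (hη2 n).1 (by ring)
  have hzD : ∀ n, z n ∈ D := fun n => by
    rw [hz]
    exact hDcv (hxD n) (hTD (hxD n)) (by linarith [(hη2 n).2]) (hη2 n).1 (by ring)
  have hyD : ∀ n, y n ∈ D := fun n => by
    rw [hy]
    exact hDcv (hTD (hxD n)) (hTD (hzD n)) (by linarith [(hη1 n).2]) (hη1 n).1 (by ring)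
  -- one-step estimate
  have key : ∀ n, ‖x (n + 1) - xstar‖ ≤
      δ ^ 2 * (1 - η1 n * η2 n * (1 - δ)) * ‖x n - xstar‖ := by
    intro n
    obtain ⟨h10, h11⟩ := hη1 n
    obtain ⟨h20, h21⟩ := hη2 n
    have hxn := norm_nonneg (x n - xstar)
    have hzbound : ‖z n - xstar‖ ≤ (1 - η2 n * (1 - δ)) * ‖x n - xstar‖ := by
      have hT := hcontr (x n) (hxD n) xstar hxsD
      have : z n - xstar = (1 - η2 n) • (x n - xstar) + η2 n • (T (x n) - xstar) := by
        rw [hz]; module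
      calc ‖z n - xstar‖ ≤ (1 - η2 n) * ‖x n - xstar‖ + η2 n * ‖T (x n) - xstar‖ := by
            rw [this]
            refine (norm_add_le _ _).trans ?_
            rw [norm_smul, norm_smul, Real.norm_eq_abs, Real.norm_eq_abs,
              abs_of_nonneg (by linarith), abs_of_nonneg h20]
        _ ≤ (1 - η2 n) * ‖x n - xstar‖ + η2 n * (δ * ‖x n - xstar‖) := by
            rw [hfix] at hT
            nlinarith [mul_le_mul_of_nonneg_left hT h20]
        _ = (1 - η2 n * (1 - δ)) * ‖x n - xstar‖ := by ring
    have hybound : ‖y n - xstar‖ ≤ δ * (1 - η1 n * η2 n * (1 - δ)) * ‖x n - xstar‖ := by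
      have hT1 := hcontr (x n) (hxD n) xstar hxsD
      have hT2 := hcontr (z n) (hzD n) xstar hxsD
      rw [hfix] at hT1 hT2
      have : y n - xstar = (1 - η1 n) • (T (x n) - xstar) + η1 n • (T (z n) - xstar) := by
        rw [hy]; module
      calc ‖y n - xstar‖ ≤ (1 - η1 n) * ‖T (x n) - xstar‖ + η1 n * ‖T (z n) - xstar‖ := by
            rw [this]
            refine (norm_add_le _ _).trans ?_
            rw [norm_smul, norm_smul, Real.norm_eq_abs, Real.norm_eq_abs,
              abs_of_nonneg (by linarith), abs_of_nonneg h10]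
        _ ≤ (1 - η1 n) * (δ * ‖x n - xstar‖) + η1 n * (δ * ‖z n - xstar‖) := by
            nlinarith [mul_le_mul_of_nonneg_left hT1 (by linarith : (0:ℝ) ≤ 1 - η1 n),
              mul_le_mul_of_nonneg_left hT2 h10]
        _ ≤ (1 - η1 n) * (δ * ‖x n - xstar‖)
              + η1 n * (δ * ((1 - η2 n * (1 - δ)) * ‖x n - xstar‖)) := by
            nlinarith [mul_le_mul_of_nonneg_left hzbound (mul_nonneg h10 hδ0.le)]
        _ = δ * (1 - η1 n * η2 n * (1 - δ)) * ‖x n - xstar‖ := by ring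
    have hT := hcontr (y n) (hyD n) xstar hxsD
    rw [hfix] at hT
    calc ‖x (n + 1) - xstar‖ = ‖T (y n) - xstar‖ := by rw [hxrec]
      _ ≤ δ * ‖y n - xstar‖ := hT
      _ ≤ δ * (δ * (1 - η1 n * η2 n * (1 - δ)) * ‖x n - xstar‖) := by
          nlinarith [norm_nonneg (y n - xstar)]
      _ = δ ^ 2 * (1 - η1 n * η2 n * (1 - δ)) * ‖x n - xstar‖ := by ring
  intro n
  induction n with
  | zero =>
    simpa [mul_comm, mul_assoc, mul_left_comm, pow_succ] using key 0
  | succ n ih =>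
    have hfac : (0:ℝ) ≤ 1 - η1 (n + 1) * η2 (n + 1) * (1 - δ) := by
      obtain ⟨h10, h11⟩ := hη1 (n + 1)
      obtain ⟨h20, h21⟩ := hη2 (n + 1)
      have h12 : η1 (n + 1) * η2 (n + 1) ≤ 1 := by nlinarith
      nlinarith [mul_nonneg h10 h20]
    calc ‖x (n + 2) - xstar‖
        ≤ δ ^ 2 * (1 - η1 (n+1) * η2 (n+1) * (1 - δ)) * ‖x (n+1) - xstar‖ := key (n + 1)
      _ ≤ δ ^ 2 * (1 - η1 (n+1) * η2 (n+1) * (1 - δ)) *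
          (‖x 0 - xstar‖ * δ ^ (2 * (n + 1)) *
            ∏ k ∈ Finset.range (n + 1), (1 - η1 k * η2 k * (1 - δ))) := by
          apply mul_le_mul_of_nonneg_left ih
          positivity
      _ = ‖x 0 - xstar‖ * δ ^ (2 * (n + 2)) *
            ∏ k ∈ Finset.range (n + 2), (1 - η1 k * η2 k * (1 - δ)) := by
          conv_rhs => rw [Finset.prod_range_succ]
          ring
end

section
/- Let D be a nonempty closed convex subset of a Banach space B and T : D → D a contraction with constant δ ∈ (0,1) and fixed point x*. Let {x_n} be generated by the Picard-S iteration with η_n^1, η_n^2 ∈ [0,1] satisfying Σ_{k=0}^∞ η_k^1 η_k^2 = ∞. Then x_n → x* as n → ∞. -/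
open Filter Topology


theorem picardS_convergence {E : Type*} [NormedAddCommGroup E] [NormedSpace ℝ E] [CompleteSpace E]
    (D : Set E) (hDne : D.Nonempty) (hDcl : IsClosed D) (hDcv : Convex ℝ D)
    (T : E → E) (hTD : Set.MapsTo T D D)
    (δ : ℝ) (hδ : δ ∈ Set.Ioo (0:ℝ) 1)
    (hcontr : ∀ x ∈ D, ∀ y ∈ D, ‖T x - T y‖ ≤ δ * ‖x - y‖)
    (xstar : E) (hxsD : xstar ∈ D) (hfix : T xstar = xstar)
    (η1 η2 : ℕ → ℝ) (hη1 : ∀ n, η1 n ∈ Set.Icc (0:ℝ) 1) (hη2 : ∀ n, η2 n ∈ Set.Icc (0:ℝ) 1)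
    (x y z : ℕ → E) (hx0 : x 0 ∈ D)
    (hz : ∀ n, z n = (1 - η2 n) • x n + η2 n • T (x n))
    (hy : ∀ n, y n = (1 - η1 n) • T (x n) + η1 n • T (z n))
    (hxrec : ∀ n, x (n + 1) = T (y n))
    (hdiv : Tendsto (fun n => ∑ k ∈ Finset.range n, η1 k * η2 k) atTop atTop) :
    Tendsto x atTop (𝓝 xstar) := by
  obtain ⟨hδ0, hδ1⟩ := hδ
  have hmemz : ∀ n, x n ∈ D → z n ∈ D := fun n hxn => by
    rw [hz n]
    exact hDcv hxn (hTD hxn) (by linarith [(hη2 n).2]) (hη2 n).1 (by ring)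
  have hmemy : ∀ n, x n ∈ D → y n ∈ D := fun n hxn => by
    rw [hy n]
    exact hDcv (hTD hxn) (hTD (hmemz n hxn)) (by linarith [(hη1 n).2]) (hη1 n).1 (by ring)
  have hmem : ∀ n, x n ∈ D := by
    intro n; induction n with
    | zero => exact hx0
    | succ n ih => rw [hxrec n]; exact hTD (hmemy n ih)
  have hc : ∀ w ∈ D, ‖T w - xstar‖ ≤ δ * ‖w - xstar‖ := fun w hw => by
    have := hcontr w hw xstar hxsD; rwa [hfix] at this
  have key : ∀ n, ‖x (n+1) - xstar‖ ≤ δ * ‖x n - xstar‖ := by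
    intro n
    have hxn := hmem n
    have hTx := hc (x n) hxn
    have hz' : ‖z n - xstar‖ ≤ ‖x n - xstar‖ := by
      have heq : z n - xstar = (1 - η2 n) • (x n - xstar) + η2 n • (T (x n) - xstar) := by
        rw [hz n]; module
      have h1 : ‖z n - xstar‖ ≤ ‖(1 - η2 n) • (x n - xstar)‖ + ‖η2 n • (T (x n) - xstar)‖ := by
        rw [heq]; exact norm_add_le _ _
      rw [norm_smul, norm_smul, Real.norm_of_nonneg (by linarith [(hη2 n).2]),
        Real.norm_of_nonneg (hη2 n).1] at h1
      nlinarith [(hη2 n).1, (hη2 n).2, norm_nonneg (x n - xstar), norm_nonneg (T (x n) - xstar),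
        mul_le_mul_of_nonneg_left hTx (hη2 n).1,
        mul_nonneg (hη2 n).1 (norm_nonneg (x n - xstar))]
    have hTz : ‖T (z n) - xstar‖ ≤ δ * ‖x n - xstar‖ := by
      have := hc (z n) (hmemz n hxn)
      nlinarith [norm_nonneg (z n - xstar)]
    have hy' : ‖y n - xstar‖ ≤ δ * ‖x n - xstar‖ := by
      have heq : y n - xstar = (1 - η1 n) • (T (x n) - xstar) + η1 n • (T (z n) - xstar) := by
        rw [hy n]; module
      have h1 : ‖y n - xstar‖ ≤ ‖(1 - η1 n) • (T (x n) - xstar)‖ + ‖η1 n • (T (z n) - xstar)‖ := by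
        rw [heq]; exact norm_add_le _ _
      rw [norm_smul, norm_smul, Real.norm_of_nonneg (by linarith [(hη1 n).2]),
        Real.norm_of_nonneg (hη1 n).1] at h1
      nlinarith [(hη1 n).1, (hη1 n).2, norm_nonneg (T (x n) - xstar), norm_nonneg (T (z n) - xstar),
        mul_le_mul_of_nonneg_left hTx (by linarith [(hη1 n).2] : (0:ℝ) ≤ 1 - η1 n),
        mul_le_mul_of_nonneg_left hTz (hη1 n).1]
    have := hc (y n) (hmemy n hxn)
    rw [← hxrec n] at this
    nlinarith [norm_nonneg (y n - xstar), norm_nonneg (x n - xstar)]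
  have hgeo : ∀ n, ‖x n - xstar‖ ≤ δ ^ n * ‖x 0 - xstar‖ := by
    intro n; induction n with
    | zero => simp
    | succ n ih =>
      calc ‖x (n+1) - xstar‖ ≤ δ * ‖x n - xstar‖ := key n
        _ ≤ δ * (δ ^ n * ‖x 0 - xstar‖) := by nlinarith
        _ = δ ^ (n+1) * ‖x 0 - xstar‖ := by ring
  rw [tendsto_iff_norm_sub_tendsto_zero]
  have hlim : Tendsto (fun n => δ ^ n * ‖x 0 - xstar‖) atTop (𝓝 0) := by
    have := (tendsto_pow_atTop_nhds_zero_of_lt_one hδ0.le hδ1).mul_const ‖x 0 - xstar‖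
    simpa using this
  exact squeeze_zero (fun n => norm_nonneg _) hgeo hlim
end

section
/- Let δ ∈ (0,1) and η_n^1, η_n^2 ∈ [0,1] with Σ_{k=0}^∞ η_k^1 η_k^2 = ∞. Then ‖x_{n+1} - x*‖ ≤ ‖x_0 - x*‖ · δ^{2(n+1)} · exp(-(1-δ) Σ_{k=0}^n η_k^1 η_k^2) for the Picard-S iteration of a δ-contraction T with fixed point x*, and consequently the right-hand side tends to 0. -/
open Filter Topology

lemma picardS_comb_bound {E : Type*} [NormedAddCommGroup E] [NormedSpace ℝ E]
    (a : ℝ) (ha : 0 ≤ a) (ha1 : a ≤ 1) (u v w : E) :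
    ‖(1 - a) • u + a • v - w‖ ≤ (1 - a) * ‖u - w‖ + a * ‖v - w‖ := by
  have h : (1 - a) • u + a • v - w = (1 - a) • (u - w) + a • (v - w) := by
    module
  rw [h]
  calc ‖(1 - a) • (u - w) + a • (v - w)‖ ≤ ‖(1 - a) • (u - w)‖ + ‖a • (v - w)‖ :=
        norm_add_le _ _
    _ = (1 - a) * ‖u - w‖ + a * ‖v - w‖ := by
        rw [norm_smul, norm_smul, Real.norm_of_nonneg (by linarith), Real.norm_of_nonneg ha]

theorem picardS_exp_estimate {E : Type*} [NormedAddCommGroup E] [NormedSpace ℝ E] [CompleteSpace E]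
    (D : Set E) (hDne : D.Nonempty) (hDcl : IsClosed D) (hDcv : Convex ℝ D)
    (T : E → E) (hTD : Set.MapsTo T D D)
    (δ : ℝ) (hδ : δ ∈ Set.Ioo (0:ℝ) 1)
    (hcontr : ∀ x ∈ D, ∀ y ∈ D, ‖T x - T y‖ ≤ δ * ‖x - y‖)
    (xstar : E) (hxsD : xstar ∈ D) (hfix : T xstar = xstar)
    (η1 η2 : ℕ → ℝ) (hη1 : ∀ n, η1 n ∈ Set.Icc (0:ℝ) 1) (hη2 : ∀ n, η2 n ∈ Set.Icc (0:ℝ) 1)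
    (x y z : ℕ → E) (hx0 : x 0 ∈ D)
    (hz : ∀ n, z n = (1 - η2 n) • x n + η2 n • T (x n))
    (hy : ∀ n, y n = (1 - η1 n) • T (x n) + η1 n • T (z n))
    (hxrec : ∀ n, x (n + 1) = T (y n))
    (hdiv : Tendsto (fun n => ∑ k ∈ Finset.range n, η1 k * η2 k) atTop atTop) :
    (∀ n, ‖x (n + 1) - xstar‖ ≤
      ‖x 0 - xstar‖ * δ ^ (2 * (n + 1)) *
        Real.exp (-(1 - δ) * ∑ k ∈ Finset.range (n + 1), η1 k * η2 k)) ∧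
    Tendsto (fun n => ‖x 0 - xstar‖ * δ ^ (2 * (n + 1)) *
        Real.exp (-(1 - δ) * ∑ k ∈ Finset.range (n + 1), η1 k * η2 k)) atTop (𝓝 0) := by
  obtain ⟨hδ0, hδ1⟩ := hδ
  -- membership
  have hmem : ∀ n, x n ∈ D := by
    intro n
    induction n with
    | zero => exact hx0
    | succ n ih =>
      have hzD : z n ∈ D := by
        rw [hz n]
        exact hDcv ih (hTD ih) (by linarith [(hη2 n).2]) (hη2 n).1 (by ring)
      have hyD : y n ∈ D := by
        rw [hy n]
        exact hDcv (hTD ih) (hTD hzD) (by linarith [(hη1 n).2]) (hη1 n).1 (by ring)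
      rw [hxrec n]
      exact hTD hyD
  have hTb : ∀ u ∈ D, ‖T u - xstar‖ ≤ δ * ‖u - xstar‖ := by
    intro u hu
    have := hcontr u hu xstar hxsD
    rwa [hfix] at this
  -- one-step estimate
  have hstep : ∀ n, ‖x (n + 1) - xstar‖ ≤
      δ ^ 2 * ((1 - η1 n * η2 n * (1 - δ)) * ‖x n - xstar‖) := by
    intro n
    have hxD := hmem n
    have hzD : z n ∈ D := by
      rw [hz n]
      exact hDcv hxD (hTD hxD) (by linarith [(hη2 n).2]) (hη2 n).1 (by ring)
    have hTx := hTb (x n) hxD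
    have hTz := hTb (z n) hzD
    have hzb : ‖z n - xstar‖ ≤ (1 - η2 n * (1 - δ)) * ‖x n - xstar‖ := by
      rw [hz n]
      have h := picardS_comb_bound (η2 n) (hη2 n).1 (hη2 n).2 (x n) (T (x n)) xstar
      nlinarith [(hη2 n).1, (hη2 n).2, norm_nonneg (x n - xstar)]
    have hyb : ‖y n - xstar‖ ≤ δ * ((1 - η1 n * η2 n * (1 - δ)) * ‖x n - xstar‖) := by
      rw [hy n]
      have h := picardS_comb_bound (η1 n) (hη1 n).1 (hη1 n).2 (T (x n)) (T (z n)) xstar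
      nlinarith [mul_le_mul_of_nonneg_left hTx (by linarith [(hη1 n).2] : (0:ℝ) ≤ 1 - η1 n),
        mul_le_mul_of_nonneg_left hTz (hη1 n).1,
        mul_le_mul_of_nonneg_left hzb (mul_nonneg (hη1 n).1 hδ0.le)]
    have hyD : y n ∈ D := by
      rw [hy n]
      exact hDcv (hTD hxD) (hTD hzD) (by linarith [(hη1 n).2]) (hη1 n).1 (by ring)
    have h1 : ‖x (n + 1) - xstar‖ ≤ δ * ‖y n - xstar‖ := by
      rw [hxrec n]; exact hTb (y n) hyD
    nlinarith [norm_nonneg (y n - xstar)]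
  -- exp version of one-step estimate
  have hstep' : ∀ n, ‖x (n + 1) - xstar‖ ≤
      δ ^ 2 * (Real.exp (-(1 - δ) * (η1 n * η2 n)) * ‖x n - xstar‖) := by
    intro n
    refine (hstep n).trans ?_
    have h1 : 1 - η1 n * η2 n * (1 - δ) ≤ Real.exp (-(1 - δ) * (η1 n * η2 n)) := by
      have := Real.add_one_le_exp (-(1 - δ) * (η1 n * η2 n))
      linarith
    have hN : (0:ℝ) ≤ ‖x n - xstar‖ := norm_nonneg _
    exact mul_le_mul_of_nonneg_left (mul_le_mul_of_nonneg_right h1 hN) (sq_nonneg δ)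
  constructor
  · intro n
    induction n with
    | zero =>
      have hs1 : ∑ k ∈ Finset.range (0 + 1), η1 k * η2 k = η1 0 * η2 0 := by
        rw [Finset.sum_range_succ, Finset.sum_range_zero, zero_add]
      rw [hs1]
      exact le_of_le_of_eq (hstep' 0) (by ring)
    | succ n ih =>
      have h := hstep' (n + 1)
      have hexp : (0:ℝ) < Real.exp (-(1 - δ) * (η1 (n+1) * η2 (n+1))) := Real.exp_pos _
      calc ‖x (n + 1 + 1) - xstar‖
          ≤ δ ^ 2 * (Real.exp (-(1 - δ) * (η1 (n+1) * η2 (n+1))) * ‖x (n+1) - xstar‖) := h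
        _ ≤ δ ^ 2 * (Real.exp (-(1 - δ) * (η1 (n+1) * η2 (n+1))) *
            (‖x 0 - xstar‖ * δ ^ (2 * (n + 1)) *
              Real.exp (-(1 - δ) * ∑ k ∈ Finset.range (n + 1), η1 k * η2 k))) := by
            have := mul_le_mul_of_nonneg_left ih hexp.le
            nlinarith [sq_nonneg δ]
        _ = ‖x 0 - xstar‖ * δ ^ (2 * (n + 1 + 1)) *
            Real.exp (-(1 - δ) * ∑ k ∈ Finset.range (n + 1 + 1), η1 k * η2 k) := by
            have hsum : ∑ k ∈ Finset.range (n + 1 + 1), η1 k * η2 k =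
                (∑ k ∈ Finset.range (n + 1), η1 k * η2 k) + η1 (n + 1) * η2 (n + 1) :=
              Finset.sum_range_succ _ _
            rw [hsum, mul_add (-(1 - δ)), Real.exp_add,
              show 2 * (n + 1 + 1) = 2 * (n + 1) + 2 from by ring, pow_add]
            ring
  · have hb : ∀ n : ℕ, ‖x 0 - xstar‖ * δ ^ (2 * (n + 1)) *
        Real.exp (-(1 - δ) * ∑ k ∈ Finset.range (n + 1), η1 k * η2 k) ≤
        ‖x 0 - xstar‖ * δ ^ (2 * (n + 1)) := by
      intro n
      have hs : (0:ℝ) ≤ ∑ k ∈ Finset.range (n + 1), η1 k * η2 k :=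
        Finset.sum_nonneg fun k _ => mul_nonneg (hη1 k).1 (hη2 k).1
      have he : Real.exp (-(1 - δ) * ∑ k ∈ Finset.range (n + 1), η1 k * η2 k) ≤ 1 := by
        rw [Real.exp_le_one_iff]
        nlinarith
      have hp : (0:ℝ) ≤ ‖x 0 - xstar‖ * δ ^ (2 * (n + 1)) := by positivity
      nlinarith [Real.exp_pos (-(1 - δ) * ∑ k ∈ Finset.range (n + 1), η1 k * η2 k)]
    have hg : Tendsto (fun n : ℕ => ‖x 0 - xstar‖ * δ ^ (2 * (n + 1))) atTop (𝓝 0) := by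
      have h1 : Tendsto (fun m : ℕ => δ ^ m) atTop (𝓝 0) :=
        tendsto_pow_atTop_nhds_zero_of_lt_one hδ0.le hδ1
      have h2 : Tendsto (fun n : ℕ => 2 * (n + 1)) atTop atTop :=
        tendsto_atTop_atTop.mpr fun b => ⟨b, fun a ha => by omega⟩
      have := (h1.comp h2).const_mul ‖x 0 - xstar‖
      simpa using this
    refine squeeze_zero (fun n => by positivity) hb hg
end

section
/- Let T : D → D be a contraction with constant δ ∈ (0,1) on a nonempty closed convex subset D of a Banach space, with fixed point x*. With the Picard-S sequence {x_n} (auxiliary y_n, z_n) and the CR sequence {u_n} (auxiliary v_n, w_n) using the same parameter sequences η_n^i ∈ [0,1], the estimate ‖x_{n+1} - u_{n+1}‖ ≤ [1 - η_n^1 η_n^2 (1-δ)]·‖x_n - u_n‖ + (1-η_n^0)·‖y_n - T y_n‖ holds for all n. -/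
open Filter Topology


theorem picardS_CR_step_estimate {E : Type*} [NormedAddCommGroup E] [NormedSpace ℝ E] [CompleteSpace E]
    (D : Set E) (hDne : D.Nonempty) (hDcl : IsClosed D) (hDcv : Convex ℝ D)
    (T : E → E) (hTD : Set.MapsTo T D D)
    (δ : ℝ) (hδ : δ ∈ Set.Ioo (0:ℝ) 1)
    (hcontr : ∀ x ∈ D, ∀ y ∈ D, ‖T x - T y‖ ≤ δ * ‖x - y‖)
    (xstar : E) (hxsD : xstar ∈ D) (hfix : T xstar = xstar)
    (η1 η2 : ℕ → ℝ) (hη1 : ∀ n, η1 n ∈ Set.Icc (0:ℝ) 1) (hη2 : ∀ n, η2 n ∈ Set.Icc (0:ℝ) 1)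
    (x y z : ℕ → E) (hx0 : x 0 ∈ D)
    (hz : ∀ n, z n = (1 - η2 n) • x n + η2 n • T (x n))
    (hy : ∀ n, y n = (1 - η1 n) • T (x n) + η1 n • T (z n))
    (hxrec : ∀ n, x (n + 1) = T (y n))
    (η0 : ℕ → ℝ) (hη0 : ∀ n, η0 n ∈ Set.Icc (0:ℝ) 1)
    (u v w : ℕ → E) (hu0 : u 0 ∈ D)
    (hw : ∀ n, w n = (1 - η2 n) • u n + η2 n • T (u n))
    (hv : ∀ n, v n = (1 - η1 n) • T (u n) + η1 n • T (w n))
    (hurec : ∀ n, u (n + 1) = (1 - η0 n) • v n + η0 n • T (v n)) :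
    ∀ n, ‖x (n + 1) - u (n + 1)‖ ≤
      (1 - η1 n * η2 n * (1 - δ)) * ‖x n - u n‖ + (1 - η0 n) * ‖y n - T (y n)‖ := by
  obtain ⟨hδ0, hδ1⟩ := hδ
  have hxD : ∀ n, x n ∈ D := by
    intro n
    induction n with
    | zero => exact hx0
    | succ n ih =>
      have hzD : z n ∈ D := by
        rw [hz]
        exact hDcv ih (hTD ih) (by linarith [(hη2 n).2]) (hη2 n).1 (by ring)
      have hyD : y n ∈ D := by
        rw [hy]
        exact hDcv (hTD ih) (hTD hzD) (by linarith [(hη1 n).2]) (hη1 n).1 (by ring)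
      rw [hxrec]
      exact hTD hyD
  have huD : ∀ n, u n ∈ D := by
    intro n
    induction n with
    | zero => exact hu0
    | succ n ih =>
      have hwD : w n ∈ D := by
        rw [hw]
        exact hDcv ih (hTD ih) (by linarith [(hη2 n).2]) (hη2 n).1 (by ring)
      have hvD : v n ∈ D := by
        rw [hv]
        exact hDcv (hTD ih) (hTD hwD) (by linarith [(hη1 n).2]) (hη1 n).1 (by ring)
      rw [hurec]
      exact hDcv hvD (hTD hvD) (by linarith [(hη0 n).2]) (hη0 n).1 (by ring)
  intro n
  obtain ⟨h10, h11⟩ := hη1 n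
  obtain ⟨h20, h21⟩ := hη2 n
  obtain ⟨h00, h01⟩ := hη0 n
  have hxn := hxD n
  have hun := huD n
  have hzD : z n ∈ D := by
    rw [hz]; exact hDcv hxn (hTD hxn) (by linarith) h20 (by ring)
  have hwD : w n ∈ D := by
    rw [hw]; exact hDcv hun (hTD hun) (by linarith) h20 (by ring)
  have hyD : y n ∈ D := by
    rw [hy]; exact hDcv (hTD hxn) (hTD hzD) (by linarith) h10 (by ring)
  have hvD : v n ∈ D := by
    rw [hv]; exact hDcv (hTD hun) (hTD hwD) (by linarith) h10 (by ring)
  set a := ‖x n - u n‖ with ha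
  set b := ‖y n - T (y n)‖ with hb
  have ha0 : 0 ≤ a := norm_nonneg _
  have hb0 : 0 ≤ b := norm_nonneg _
  -- bound on ‖T x n - T u n‖
  have hTxu : ‖T (x n) - T (u n)‖ ≤ δ * a := hcontr _ hxn _ hun
  -- bound on ‖z n - w n‖
  have hzw : ‖z n - w n‖ ≤ (1 - η2 n * (1 - δ)) * a := by
    have hid : z n - w n = (1 - η2 n) • (x n - u n) + η2 n • (T (x n) - T (u n)) := by
      rw [hz, hw]; module
    calc ‖z n - w n‖ ≤ ‖(1 - η2 n) • (x n - u n)‖ + ‖η2 n • (T (x n) - T (u n))‖ := by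
          rw [hid]; exact norm_add_le _ _
      _ = |1 - η2 n| * a + |η2 n| * ‖T (x n) - T (u n)‖ := by
          rw [norm_smul, norm_smul, Real.norm_eq_abs, Real.norm_eq_abs]
      _ = (1 - η2 n) * a + η2 n * ‖T (x n) - T (u n)‖ := by
          rw [abs_of_nonneg (by linarith), abs_of_nonneg h20]
      _ ≤ (1 - η2 n) * a + η2 n * (δ * a) := by nlinarith
      _ = (1 - η2 n * (1 - δ)) * a := by ring
  have hzw0 : 0 ≤ ‖z n - w n‖ := norm_nonneg _
  -- bound on ‖y n - v n‖
  have hyv : ‖y n - v n‖ ≤ δ * ((1 - η1 n * η2 n * (1 - δ)) * a) := by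
    have hTzw : ‖T (z n) - T (w n)‖ ≤ δ * ‖z n - w n‖ := hcontr _ hzD _ hwD
    have hid : y n - v n = (1 - η1 n) • (T (x n) - T (u n)) + η1 n • (T (z n) - T (w n)) := by
      rw [hy, hv]; module
    calc ‖y n - v n‖ ≤ ‖(1 - η1 n) • (T (x n) - T (u n))‖ + ‖η1 n • (T (z n) - T (w n))‖ := by
          rw [hid]; exact norm_add_le _ _
      _ = |1 - η1 n| * ‖T (x n) - T (u n)‖ + |η1 n| * ‖T (z n) - T (w n)‖ := by
          rw [norm_smul, norm_smul, Real.norm_eq_abs, Real.norm_eq_abs]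
      _ = (1 - η1 n) * ‖T (x n) - T (u n)‖ + η1 n * ‖T (z n) - T (w n)‖ := by
          rw [abs_of_nonneg (by linarith), abs_of_nonneg h10]
      _ ≤ (1 - η1 n) * (δ * a) + η1 n * (δ * ((1 - η2 n * (1 - δ)) * a)) := by
          have h1 : η1 n * ‖T (z n) - T (w n)‖ ≤ η1 n * (δ * ((1 - η2 n * (1 - δ)) * a)) := by
            apply mul_le_mul_of_nonneg_left _ h10
            calc ‖T (z n) - T (w n)‖ ≤ δ * ‖z n - w n‖ := hTzw
              _ ≤ δ * ((1 - η2 n * (1 - δ)) * a) := by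
                  exact mul_le_mul_of_nonneg_left hzw (le_of_lt hδ0)
          nlinarith
      _ = δ * ((1 - η1 n * η2 n * (1 - δ)) * a) := by ring
  have hyv0 : 0 ≤ ‖y n - v n‖ := norm_nonneg _
  have hTyv : ‖T (y n) - T (v n)‖ ≤ δ * ‖y n - v n‖ := hcontr _ hyD _ hvD
  have hTy_v : ‖T (y n) - v n‖ ≤ b + ‖y n - v n‖ := by
    have hid : T (y n) - v n = (y n - v n) - (y n - T (y n)) := by abel
    calc ‖T (y n) - v n‖ = ‖(y n - v n) - (y n - T (y n))‖ := by rw [hid]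
      _ ≤ ‖y n - v n‖ + ‖y n - T (y n)‖ := norm_sub_le _ _
      _ = b + ‖y n - v n‖ := by rw [hb]; ring
  have hmain : ‖x (n + 1) - u (n + 1)‖ ≤
      (1 - η0 n) * ‖T (y n) - v n‖ + η0 n * ‖T (y n) - T (v n)‖ := by
    have hid : x (n + 1) - u (n + 1) =
        (1 - η0 n) • (T (y n) - v n) + η0 n • (T (y n) - T (v n)) := by
      rw [hxrec, hurec]; module
    calc ‖x (n + 1) - u (n + 1)‖
        ≤ ‖(1 - η0 n) • (T (y n) - v n)‖ + ‖η0 n • (T (y n) - T (v n))‖ := by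
          rw [hid]; exact norm_add_le _ _
      _ = |1 - η0 n| * ‖T (y n) - v n‖ + |η0 n| * ‖T (y n) - T (v n)‖ := by
          rw [norm_smul, norm_smul, Real.norm_eq_abs, Real.norm_eq_abs]
      _ = (1 - η0 n) * ‖T (y n) - v n‖ + η0 n * ‖T (y n) - T (v n)‖ := by
          rw [abs_of_nonneg (by linarith), abs_of_nonneg h00]
  have hc : 0 ≤ 1 - η1 n * η2 n * (1 - δ) := by
    have h12 : η1 n * η2 n ≤ 1 := by nlinarith
    nlinarith [mul_nonneg h10 h20]
  have hstep : ‖x (n + 1) - u (n + 1)‖ ≤ (1 - η0 n) * b + ‖y n - v n‖ := by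
    have h1 : (1 - η0 n) * ‖T (y n) - v n‖ ≤ (1 - η0 n) * (b + ‖y n - v n‖) :=
      mul_le_mul_of_nonneg_left hTy_v (by linarith)
    have h2 : η0 n * ‖T (y n) - T (v n)‖ ≤ η0 n * (δ * ‖y n - v n‖) :=
      mul_le_mul_of_nonneg_left hTyv h00
    nlinarith [mul_nonneg (mul_nonneg h00 hyv0) (by linarith : (0:ℝ) ≤ 1 - δ)]
  have hfin : ‖y n - v n‖ ≤ (1 - η1 n * η2 n * (1 - δ)) * a := by
    calc ‖y n - v n‖ ≤ δ * ((1 - η1 n * η2 n * (1 - δ)) * a) := hyv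
      _ ≤ (1 - η1 n * η2 n * (1 - δ)) * a := by nlinarith [mul_nonneg hc ha0]
  linarith
end

section
/- With T a δ-contraction, T̃ an ε-approximate operator of T, and Picard-S sequences {x_n} for T and {x̃_n} for T̃ with the same parameters η_n^1, η_n^2 ∈ [0,1] satisfying 1/2 ≤ η_n^1 η_n^2, the following one-step estimate holds: ‖x_{n+1} - x̃_{n+1}‖ ≤ [1 - η_n^1 η_n^2 (1-δ)]·‖x_n - x̃_n‖ + η_n^1 η_n^2 (1-δ) · 5ε/(1-δ). -/
set_option maxHeartbeats 800000


open Filter Topology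

theorem picardS_data_dependence_step {B : Type*} [NormedAddCommGroup B] [NormedSpace ℝ B]
    [CompleteSpace B]
    (T T' : B → B) (δ : ℝ) (hδ : δ ∈ Set.Ioo (0:ℝ) 1)
    (hcontr : ∀ x y : B, ‖T x - T y‖ ≤ δ * ‖x - y‖)
    (ε : ℝ) (hε : 0 < ε) (happrox : ∀ x : B, ‖T x - T' x‖ ≤ ε)
    (η1 η2 : ℕ → ℝ) (hη1 : ∀ n, η1 n ∈ Set.Icc (0:ℝ) 1) (hη2 : ∀ n, η2 n ∈ Set.Icc (0:ℝ) 1)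
    (hhalf : ∀ n, (1:ℝ)/2 ≤ η1 n * η2 n)
    (x y z : ℕ → B)
    (hz : ∀ n, z n = (1 - η2 n) • x n + η2 n • T (x n))
    (hy : ∀ n, y n = (1 - η1 n) • T (x n) + η1 n • T (z n))
    (hxrec : ∀ n, x (n + 1) = T (y n))
    (x' y' z' : ℕ → B)
    (hz' : ∀ n, z' n = (1 - η2 n) • x' n + η2 n • T' (x' n))
    (hy' : ∀ n, y' n = (1 - η1 n) • T' (x' n) + η1 n • T' (z' n))
    (hxrec' : ∀ n, x' (n + 1) = T' (y' n)) :
    ∀ n, ‖x (n + 1) - x' (n + 1)‖ ≤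
      (1 - η1 n * η2 n * (1 - δ)) * ‖x n - x' n‖ +
        η1 n * η2 n * (1 - δ) * (5 * ε / (1 - δ)) := by
  obtain ⟨hδ0, hδ1⟩ := hδ
  intro n
  obtain ⟨h10, h11⟩ := hη1 n
  obtain ⟨h20, h21⟩ := hη2 n
  have h1d : (0:ℝ) < 1 - δ := by linarith
  -- approximate contraction estimates
  have hTx : ‖T (x n) - T' (x' n)‖ ≤ δ * ‖x n - x' n‖ + ε := by
    calc ‖T (x n) - T' (x' n)‖ ≤ ‖T (x n) - T (x' n)‖ + ‖T (x' n) - T' (x' n)‖ := by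
          simpa using norm_sub_le_norm_sub_add_norm_sub (T (x n)) (T (x' n)) (T' (x' n))
      _ ≤ δ * ‖x n - x' n‖ + ε := add_le_add (hcontr _ _) (happrox _)
  have hTz : ‖T (z n) - T' (z' n)‖ ≤ δ * ‖z n - z' n‖ + ε := by
    calc ‖T (z n) - T' (z' n)‖ ≤ ‖T (z n) - T (z' n)‖ + ‖T (z' n) - T' (z' n)‖ := by
          simpa using norm_sub_le_norm_sub_add_norm_sub (T (z n)) (T (z' n)) (T' (z' n))
      _ ≤ δ * ‖z n - z' n‖ + ε := add_le_add (hcontr _ _) (happrox _)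
  have hzz : ‖z n - z' n‖ ≤ (1 - η2 n) * ‖x n - x' n‖ + η2 n * ‖T (x n) - T' (x' n)‖ := by
    have : z n - z' n = (1 - η2 n) • (x n - x' n) + η2 n • (T (x n) - T' (x' n)) := by
      rw [hz, hz']; module
    rw [this]
    calc ‖(1 - η2 n) • (x n - x' n) + η2 n • (T (x n) - T' (x' n))‖
        ≤ ‖(1 - η2 n) • (x n - x' n)‖ + ‖η2 n • (T (x n) - T' (x' n))‖ := norm_add_le _ _
      _ = (1 - η2 n) * ‖x n - x' n‖ + η2 n * ‖T (x n) - T' (x' n)‖ := by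
          rw [norm_smul, norm_smul, Real.norm_eq_abs, Real.norm_eq_abs,
            abs_of_nonneg (by linarith), abs_of_nonneg h20]
  have hyy : ‖y n - y' n‖ ≤ (1 - η1 n) * ‖T (x n) - T' (x' n)‖ + η1 n * ‖T (z n) - T' (z' n)‖ := by
    have : y n - y' n = (1 - η1 n) • (T (x n) - T' (x' n)) + η1 n • (T (z n) - T' (z' n)) := by
      rw [hy, hy']; module
    rw [this]
    calc ‖(1 - η1 n) • (T (x n) - T' (x' n)) + η1 n • (T (z n) - T' (z' n))‖
        ≤ ‖(1 - η1 n) • (T (x n) - T' (x' n))‖ + ‖η1 n • (T (z n) - T' (z' n))‖ := norm_add_le _ _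
      _ = (1 - η1 n) * ‖T (x n) - T' (x' n)‖ + η1 n * ‖T (z n) - T' (z' n)‖ := by
          rw [norm_smul, norm_smul, Real.norm_eq_abs, Real.norm_eq_abs,
            abs_of_nonneg (by linarith), abs_of_nonneg h10]
  have hfin : ‖x (n+1) - x' (n+1)‖ ≤ δ * ‖y n - y' n‖ + ε := by
    rw [hxrec, hxrec']
    calc ‖T (y n) - T' (y' n)‖ ≤ ‖T (y n) - T (y' n)‖ + ‖T (y' n) - T' (y' n)‖ := by
          simpa using norm_sub_le_norm_sub_add_norm_sub (T (y n)) (T (y' n)) (T' (y' n))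
      _ ≤ δ * ‖y n - y' n‖ + ε := add_le_add (hcontr _ _) (happrox _)
  have h5 : η1 n * η2 n * (1 - δ) * (5 * ε / (1 - δ)) = 5 * (η1 n * η2 n) * ε := by
    field_simp
  rw [h5]
  have hnx : (0:ℝ) ≤ ‖x n - x' n‖ := norm_nonneg _
  have hhn := hhalf n
  set a := ‖x n - x' n‖ with ha
  set b := ‖T (x n) - T' (x' n)‖ with hb
  set c := ‖z n - z' n‖ with hc
  set d := ‖T (z n) - T' (z' n)‖ with hdd
  set e := ‖y n - y' n‖ with he
  have hδ0' : (0:ℝ) ≤ δ := le_of_lt hδ0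
  have hc2 : c ≤ (1 - η2 n * (1 - δ)) * a + η2 n * ε := by
    have := mul_le_mul_of_nonneg_left hTx h20
    nlinarith [hzz]
  have hd2 : d ≤ δ * ((1 - η2 n * (1 - δ)) * a + η2 n * ε) + ε := by
    have := mul_le_mul_of_nonneg_left hc2 hδ0'
    linarith [hTz]
  have he2 : e ≤ (1 - η1 n) * (δ * a + ε) +
      η1 n * (δ * ((1 - η2 n * (1 - δ)) * a + η2 n * ε) + ε) := by
    have h1 := mul_le_mul_of_nonneg_left hTx (by linarith : (0:ℝ) ≤ 1 - η1 n)
    have h2 := mul_le_mul_of_nonneg_left hd2 h10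
    linarith [hyy]
  have hfin2 : ‖x (n+1) - x' (n+1)‖ ≤ δ * ((1 - η1 n) * (δ * a + ε) +
      η1 n * (δ * ((1 - η2 n * (1 - δ)) * a + η2 n * ε) + ε)) + ε := by
    have := mul_le_mul_of_nonneg_left he2 hδ0'
    linarith [hfin]
  have hfac : (0:ℝ) ≤ 1 - η1 n * η2 n * (1 - δ) := by nlinarith
  have hsq : (0:ℝ) ≤ 1 - δ ^ 2 := by nlinarith
  have t1 : (0:ℝ) ≤ a * ((1 - δ ^ 2) * (1 - η1 n * η2 n * (1 - δ))) :=
    mul_nonneg hnx (mul_nonneg hsq hfac)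
  have t2 : (0:ℝ) ≤ ε * ((4 * (η1 n * η2 n) - 1 - δ) + (η1 n * η2 n) * (1 - δ ^ 2)) := by
    have h4 : (0:ℝ) ≤ 4 * (η1 n * η2 n) - 1 - δ := by linarith
    have h5' : (0:ℝ) ≤ (η1 n * η2 n) * (1 - δ ^ 2) := mul_nonneg (by linarith) hsq
    exact mul_nonneg hε.le (by linarith)
  nlinarith [hfin2, t1, t2]
end

section
/- Under conditions (A1)–(A5) (τ > 0; f continuous; ψ continuous; f Lipschitz with constant L_f in the last two variables summed; 2L_f(b-t_0) < 1), the delay differential problem x'(t) = f(t, x(t), x(t-τ)) for t ∈ [t_0,b] with x(t) = ψ(t) on [t_0-τ, t_0] has a unique solution x*, and the Picard-S iteration applied to the associated integral operator T, with parameters η_n^1, η_n^2 ∈ [0,1] satisfying Σ η_k^1 η_k^2 = ∞, converges in sup norm to x*. -/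
open Filter Topology

theorem delay_picardS_convergence (t0 b τ L : ℝ) (hτ : 0 < τ) (htb : t0 < b) (hL : 0 < L)
    (f : ℝ → ℝ → ℝ → ℝ)
    (hfcont : Continuous fun p : ℝ × ℝ × ℝ => f p.1 p.2.1 p.2.2)
    (hlip : ∀ t ∈ Set.Icc t0 b, ∀ u1 u2 v1 v2 : ℝ,
      |f t u1 u2 - f t v1 v2| ≤ L * (|u1 - v1| + |u2 - v2|))
    (hsmall : 2 * L * (b - t0) < 1)
    (ψ : ℝ → ℝ) (hψ : Continuous ψ)
    (T : C(Set.Icc (t0 - τ) b, ℝ) → C(Set.Icc (t0 - τ) b, ℝ))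
    (hT : ∀ (x : C(Set.Icc (t0 - τ) b, ℝ)) (t : Set.Icc (t0 - τ) b),
      T x t = if (t : ℝ) ≤ t0 then ψ t else
        ψ t0 + ∫ s in t0..(t : ℝ),
          f s (x (Set.projIcc (t0 - τ) b (by linarith) s))
            (x (Set.projIcc (t0 - τ) b (by linarith) (s - τ))))
    (η1 η2 : ℕ → ℝ) (hη1 : ∀ n, η1 n ∈ Set.Icc (0:ℝ) 1) (hη2 : ∀ n, η2 n ∈ Set.Icc (0:ℝ) 1)
    (hdiv : Tendsto (fun n => ∑ k ∈ Finset.range n, η1 k * η2 k) atTop atTop)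
    (x y z : ℕ → C(Set.Icc (t0 - τ) b, ℝ))
    (hz : ∀ n, z n = (1 - η2 n) • x n + η2 n • T (x n))
    (hy : ∀ n, y n = (1 - η1 n) • T (x n) + η1 n • T (z n))
    (hxrec : ∀ n, x (n + 1) = T (y n)) :
    ∃ xstar : C(Set.Icc (t0 - τ) b, ℝ), T xstar = xstar ∧
      (∀ w, T w = w → w = xstar) ∧ Tendsto x atTop (𝓝 xstar) := by
  have hle : t0 - τ ≤ b := by linarith
  set q : ℝ := 2 * L * (b - t0) with hqdef
  have hq0 : 0 < q := by
    have hb : 0 < b - t0 := by linarith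
    rw [hqdef]; positivity
  have hq1 : q < 1 := hsmall
  -- continuity of the integrand
  have hcw : ∀ w : C(Set.Icc (t0 - τ) b, ℝ), Continuous fun s : ℝ =>
      f s (w (Set.projIcc (t0 - τ) b hle s)) (w (Set.projIcc (t0 - τ) b hle (s - τ))) := by
    intro w
    exact hfcont.comp (continuous_id.prodMk
      ((w.continuous.comp continuous_projIcc).prodMk
        (w.continuous.comp (continuous_projIcc.comp (continuous_id.sub continuous_const)))))
  -- contraction estimate
  have hcontraction : ∀ u v : C(Set.Icc (t0 - τ) b, ℝ),
      dist (T u) (T v) ≤ q * dist u v := by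
    intro u v
    rw [ContinuousMap.dist_le (by positivity)]
    intro t
    rw [hT u t, hT v t]
    by_cases ht : (t : ℝ) ≤ t0
    · simp only [if_pos ht, dist_self]
      exact mul_nonneg hq0.le dist_nonneg
    · push_neg at ht
      rw [if_neg (not_le.mpr ht), if_neg (not_le.mpr ht), dist_add_left, Real.dist_eq]
      have hiu := (hcw u).intervalIntegrable (μ := MeasureTheory.volume) t0 (t : ℝ)
      have hiv := (hcw v).intervalIntegrable (μ := MeasureTheory.volume) t0 (t : ℝ)
      rw [← intervalIntegral.integral_sub hiu hiv]
      have hb1 : ∀ s ∈ Set.uIoc t0 (t : ℝ),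
          ‖(f s (u (Set.projIcc (t0 - τ) b hle s)) (u (Set.projIcc (t0 - τ) b hle (s - τ)))) -
            (f s (v (Set.projIcc (t0 - τ) b hle s)) (v (Set.projIcc (t0 - τ) b hle (s - τ))))‖
            ≤ 2 * L * dist u v := by
        intro s hs
        rw [Set.uIoc_of_le ht.le] at hs
        have hs1 : s ∈ Set.Icc t0 b := ⟨hs.1.le, hs.2.trans t.2.2⟩
        have h1 : |u (Set.projIcc (t0 - τ) b hle s) - v (Set.projIcc (t0 - τ) b hle s)|
            ≤ dist u v := by
          rw [← Real.dist_eq]; exact ContinuousMap.dist_apply_le_dist _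
        have h2 : |u (Set.projIcc (t0 - τ) b hle (s - τ)) -
            v (Set.projIcc (t0 - τ) b hle (s - τ))| ≤ dist u v := by
          rw [← Real.dist_eq]; exact ContinuousMap.dist_apply_le_dist _
        have h3 := hlip s hs1 (u (Set.projIcc (t0 - τ) b hle s))
          (u (Set.projIcc (t0 - τ) b hle (s - τ))) (v (Set.projIcc (t0 - τ) b hle s))
          (v (Set.projIcc (t0 - τ) b hle (s - τ)))
        rw [Real.norm_eq_abs]
        nlinarith
      calc |(∫ s in t0..(t : ℝ),
            ((f s (u (Set.projIcc (t0 - τ) b hle s)) (u (Set.projIcc (t0 - τ) b hle (s - τ)))) -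
             (f s (v (Set.projIcc (t0 - τ) b hle s)) (v (Set.projIcc (t0 - τ) b hle (s - τ))))))|
          ≤ 2 * L * dist u v * |(t : ℝ) - t0| :=
            intervalIntegral.norm_integral_le_of_norm_le_const hb1
        _ ≤ q * dist u v := by
            rw [abs_of_nonneg (by linarith)]
            have htb' : (t : ℝ) - t0 ≤ b - t0 := by linarith [t.2.2]
            have hd : (0:ℝ) ≤ dist u v := dist_nonneg
            rw [hqdef]
            nlinarith [mul_le_mul_of_nonneg_left htb'
              (mul_nonneg (mul_nonneg (by norm_num : (0:ℝ) ≤ 2) hL.le) hd)]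
  -- Banach fixed point
  have hcontrT : ContractingWith ⟨q, hq0.le⟩ T := by
    constructor
    · exact_mod_cast hq1
    · apply LipschitzWith.of_dist_le_mul
      intro u v
      exact_mod_cast hcontraction u v
  set xstar := ContractingWith.fixedPoint T hcontrT with hxsdef
  have hxs : T xstar = xstar := hcontrT.fixedPoint_isFixedPt
  refine ⟨xstar, hxs, fun w hw => hcontrT.fixedPoint_unique hw, ?_⟩
  -- convergence of the Picard-S iteration
  have hTd : ∀ u, dist (T u) xstar ≤ q * dist u xstar := fun u => by
    calc dist (T u) xstar = dist (T u) (T xstar) := by rw [hxs]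
      _ ≤ q * dist u xstar := hcontraction u xstar
  have hconv : ∀ (a : ℝ) (w w' : C(Set.Icc (t0 - τ) b, ℝ)), a ∈ Set.Icc (0:ℝ) 1 →
      dist ((1 - a) • w + a • w') xstar ≤
        (1 - a) * dist w xstar + a * dist w' xstar := by
    intro a w w' ha
    have hD1 : (0:ℝ) ≤ dist w xstar := dist_nonneg
    have hD2 : (0:ℝ) ≤ dist w' xstar := dist_nonneg
    rw [ContinuousMap.dist_le (by nlinarith [ha.1, ha.2])]
    intro t
    have h1 : dist (w t) (xstar t) ≤ dist w xstar := ContinuousMap.dist_apply_le_dist t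
    have h2 : dist (w' t) (xstar t) ≤ dist w' xstar := ContinuousMap.dist_apply_le_dist t
    simp only [ContinuousMap.add_apply, ContinuousMap.smul_apply, smul_eq_mul,
      Real.dist_eq] at *
    have key : (1 - a) * w t + a * w' t - xstar t =
        (1 - a) * (w t - xstar t) + a * (w' t - xstar t) := by ring
    rw [key]
    calc |(1 - a) * (w t - xstar t) + a * (w' t - xstar t)|
        ≤ |(1 - a) * (w t - xstar t)| + |a * (w' t - xstar t)| := abs_add_le _ _
      _ = (1 - a) * |w t - xstar t| + a * |w' t - xstar t| := by
          rw [abs_mul, abs_mul, abs_of_nonneg (by linarith [ha.2]), abs_of_nonneg ha.1]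
      _ ≤ (1 - a) * dist w xstar + a * dist w' xstar := by
          nlinarith [ha.1, ha.2, abs_nonneg (w t - xstar t), abs_nonneg (w' t - xstar t)]
  set d : ℕ → ℝ := fun n => dist (x n) xstar with hddef
  have hd0 : ∀ n, 0 ≤ d n := fun n => dist_nonneg
  have hstep : ∀ n, d (n + 1) ≤ (1 - (1 - q) * (η1 n * η2 n)) * d n := by
    intro n
    have hz' : dist (z n) xstar ≤ ((1 - η2 n) + η2 n * q) * d n := by
      rw [hz]
      calc dist ((1 - η2 n) • x n + η2 n • T (x n)) xstar
          ≤ (1 - η2 n) * dist (x n) xstar + η2 n * dist (T (x n)) xstar :=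
            hconv _ _ _ (hη2 n)
        _ ≤ ((1 - η2 n) + η2 n * q) * d n := by
            have := hTd (x n)
            have h2 := (hη2 n).1
            nlinarith [hd0 n]
    have hy' : dist (y n) xstar ≤
        ((1 - η1 n) * q + η1 n * q * ((1 - η2 n) + η2 n * q)) * d n := by
      rw [hy]
      calc dist ((1 - η1 n) • T (x n) + η1 n • T (z n)) xstar
          ≤ (1 - η1 n) * dist (T (x n)) xstar + η1 n * dist (T (z n)) xstar :=
            hconv _ _ _ (hη1 n)
        _ ≤ ((1 - η1 n) * q + η1 n * q * ((1 - η2 n) + η2 n * q)) * d n := by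
            have h1 := hTd (x n)
            have h2 := hTd (z n)
            have h3 := (hη1 n).1
            have h4 := (hη1 n).2
            have h5 : (0:ℝ) ≤ dist (z n) xstar := dist_nonneg
            nlinarith [hd0 n, mul_le_mul_of_nonneg_left hz' hq0.le]
    calc d (n + 1) = dist (T (y n)) xstar := by rw [hddef]; simp [hxrec]
      _ ≤ q * dist (y n) xstar := hTd _
      _ ≤ (1 - (1 - q) * (η1 n * η2 n)) * d n := by
          have h3 := (hη1 n).1
          have h4 := (hη1 n).2
          have h5 := (hη2 n).1
          have h6 := (hη2 n).2
          have hX : 0 ≤ 1 - (1 - q) * (η1 n * η2 n) := by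
            have hac1 : η1 n * η2 n ≤ 1 := by nlinarith
            nlinarith [mul_nonneg hq0.le (mul_nonneg h3 h5), mul_nonneg h3 h5]
          have e2 : q ^ 2 ≤ 1 := by nlinarith
          calc q * dist (y n) xstar
              ≤ q * (((1 - η1 n) * q + η1 n * q * ((1 - η2 n) + η2 n * q)) * d n) :=
                mul_le_mul_of_nonneg_left hy' hq0.le
            _ = q ^ 2 * (1 - (1 - q) * (η1 n * η2 n)) * d n := by ring
            _ ≤ 1 * (1 - (1 - q) * (η1 n * η2 n)) * d n :=
                mul_le_mul_of_nonneg_right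
                  (mul_le_mul_of_nonneg_right e2 hX) (hd0 n)
            _ = (1 - (1 - q) * (η1 n * η2 n)) * d n := by ring
  have hc : ∀ k, 0 ≤ 1 - (1 - q) * (η1 k * η2 k) := by
    intro k
    have h3 := (hη1 k).1; have h4 := (hη1 k).2
    have h5 := (hη2 k).1; have h6 := (hη2 k).2
    have hac1 : η1 k * η2 k ≤ 1 := by nlinarith
    nlinarith [mul_nonneg hq0.le (mul_nonneg h3 h5), mul_nonneg h3 h5]
  have hprod : ∀ n, d n ≤ d 0 * ∏ k ∈ Finset.range n, (1 - (1 - q) * (η1 k * η2 k)) := by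
    intro n
    induction n with
    | zero => simp
    | succ n ih =>
      calc d (n + 1) ≤ (1 - (1 - q) * (η1 n * η2 n)) * d n := hstep n
        _ ≤ (1 - (1 - q) * (η1 n * η2 n)) *
            (d 0 * ∏ k ∈ Finset.range n, (1 - (1 - q) * (η1 k * η2 k))) :=
            mul_le_mul_of_nonneg_left ih (hc n)
        _ = d 0 * ∏ k ∈ Finset.range (n + 1), (1 - (1 - q) * (η1 k * η2 k)) := by
            rw [Finset.prod_range_succ]; ring
  have hexp : ∀ n, (∏ k ∈ Finset.range n, (1 - (1 - q) * (η1 k * η2 k))) ≤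
      Real.exp (-(1 - q) * ∑ k ∈ Finset.range n, η1 k * η2 k) := by
    intro n
    calc (∏ k ∈ Finset.range n, (1 - (1 - q) * (η1 k * η2 k)))
        ≤ ∏ k ∈ Finset.range n, Real.exp (-(1 - q) * (η1 k * η2 k)) := by
          apply Finset.prod_le_prod (fun k _ => hc k)
          intro k _
          have := Real.add_one_le_exp (-(1 - q) * (η1 k * η2 k))
          linarith
      _ = Real.exp (-(1 - q) * ∑ k ∈ Finset.range n, η1 k * η2 k) := by
          rw [← Real.exp_sum, Finset.mul_sum]
  have hlim : Tendsto (fun n => d 0 *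
      Real.exp (-(1 - q) * ∑ k ∈ Finset.range n, η1 k * η2 k)) atTop (𝓝 0) := by
    have h1 : Tendsto (fun n => -(1 - q) * ∑ k ∈ Finset.range n, η1 k * η2 k) atTop atBot := by
      have h2 := hdiv.const_mul_atTop (by linarith : (0:ℝ) < 1 - q)
      have h3 := tendsto_neg_atTop_atBot.comp h2
      have heq : (fun n => -(1 - q) * ∑ k ∈ Finset.range n, η1 k * η2 k) =
          (Neg.neg ∘ fun n => (1 - q) * ∑ k ∈ Finset.range n, η1 k * η2 k) := by
        funext n; simp only [Function.comp_apply, neg_mul]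
      rw [heq]; exact h3
    have h2 := Real.tendsto_exp_atBot.comp h1
    simpa using h2.const_mul (d 0)
  have hdlim : Tendsto d atTop (𝓝 0) := by
    apply squeeze_zero (fun n => hd0 n) (fun n => ?_) hlim
    exact (hprod n).trans (mul_le_mul_of_nonneg_left (hexp n) (hd0 0))
  exact tendsto_iff_dist_tendsto_zero.mpr hdlim
end

section
/- With T the integral operator of the delay problem satisfying 2L_f(b-t_0) < 1 and x* its fixed point, the Picard-S iterates satisfy ‖x_{n+1} - x*‖_∞ ≤ 4L_f²(b-t_0)² [1 - η_n^1 η_n^2 (1 - 2L_f(b-t_0))]·‖x_n - x*‖_∞ for all n, where η_n^1, η_n^2 ∈ [0,1]. -/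
open Filter Topology

theorem delay_picardS_step_estimate (t0 b τ L : ℝ) (hτ : 0 < τ) (htb : t0 < b) (hL : 0 < L)
    (f : ℝ → ℝ → ℝ → ℝ)
    (hfcont : Continuous fun p : ℝ × ℝ × ℝ => f p.1 p.2.1 p.2.2)
    (hlip : ∀ t ∈ Set.Icc t0 b, ∀ u1 u2 v1 v2 : ℝ,
      |f t u1 u2 - f t v1 v2| ≤ L * (|u1 - v1| + |u2 - v2|))
    (hsmall : 2 * L * (b - t0) < 1)
    (ψ : ℝ → ℝ) (hψ : Continuous ψ)
    (T : C(Set.Icc (t0 - τ) b, ℝ) → C(Set.Icc (t0 - τ) b, ℝ))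
    (hT : ∀ (x : C(Set.Icc (t0 - τ) b, ℝ)) (t : Set.Icc (t0 - τ) b),
      T x t = if (t : ℝ) ≤ t0 then ψ t else
        ψ t0 + ∫ s in t0..(t : ℝ),
          f s (x (Set.projIcc (t0 - τ) b (by linarith) s))
            (x (Set.projIcc (t0 - τ) b (by linarith) (s - τ))))
    (xstar : C(Set.Icc (t0 - τ) b, ℝ)) (hfix : T xstar = xstar)
    (η1 η2 : ℕ → ℝ) (hη1 : ∀ n, η1 n ∈ Set.Icc (0:ℝ) 1) (hη2 : ∀ n, η2 n ∈ Set.Icc (0:ℝ) 1)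
    (x y z : ℕ → C(Set.Icc (t0 - τ) b, ℝ))
    (hz : ∀ n, z n = (1 - η2 n) • x n + η2 n • T (x n))
    (hy : ∀ n, y n = (1 - η1 n) • T (x n) + η1 n • T (z n))
    (hxrec : ∀ n, x (n + 1) = T (y n)) :
    ∀ n, ‖x (n + 1) - xstar‖ ≤
      4 * L ^ 2 * (b - t0) ^ 2 * (1 - η1 n * η2 n * (1 - 2 * L * (b - t0))) *
        ‖x n - xstar‖ := by
  have hlow : t0 - τ ≤ b := by linarith
  set q : ℝ := 2 * L * (b - t0) with hqdef
  have hq0 : 0 ≤ q := by rw [hqdef]; nlinarith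
  have hcont : ∀ w : C(Set.Icc (t0 - τ) b, ℝ),
      Continuous (fun s : ℝ => f s (w (Set.projIcc (t0 - τ) b hlow s))
        (w (Set.projIcc (t0 - τ) b hlow (s - τ)))) := by
    intro w
    exact hfcont.comp (continuous_id.prodMk
      ((w.continuous.comp continuous_projIcc).prodMk
        (w.continuous.comp (continuous_projIcc.comp (continuous_sub_right τ)))))
  have key : ∀ u v : C(Set.Icc (t0 - τ) b, ℝ), ‖T u - T v‖ ≤ q * ‖u - v‖ := by
    intro u v
    have hC : (0:ℝ) ≤ q * ‖u - v‖ := mul_nonneg hq0 (norm_nonneg _)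
    refine (ContinuousMap.norm_le _ hC).mpr fun t => ?_
    rw [ContinuousMap.sub_apply, hT, hT]
    by_cases h : (t : ℝ) ≤ t0
    · simpa [h] using hC
    · simp only [if_neg h]
      push_neg at h
      have htb' : (t : ℝ) ≤ b := t.2.2
      have hiu := ((hcont u).intervalIntegrable (μ := MeasureTheory.volume) t0 (t : ℝ))
      have hiv := ((hcont v).intervalIntegrable (μ := MeasureTheory.volume) t0 (t : ℝ))
      have heq : (ψ t0 + ∫ s in t0..(t : ℝ), f s (u (Set.projIcc (t0 - τ) b hlow s))
            (u (Set.projIcc (t0 - τ) b hlow (s - τ)))) -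
          (ψ t0 + ∫ s in t0..(t : ℝ), f s (v (Set.projIcc (t0 - τ) b hlow s))
            (v (Set.projIcc (t0 - τ) b hlow (s - τ)))) =
          ∫ s in t0..(t : ℝ), (f s (u (Set.projIcc (t0 - τ) b hlow s))
            (u (Set.projIcc (t0 - τ) b hlow (s - τ))) -
            f s (v (Set.projIcc (t0 - τ) b hlow s))
            (v (Set.projIcc (t0 - τ) b hlow (s - τ)))) := by
        rw [intervalIntegral.integral_sub hiu hiv]; ring
      rw [heq]
      have hbound : ∀ s ∈ Set.uIoc t0 (t : ℝ),
          ‖f s (u (Set.projIcc (t0 - τ) b hlow s)) (u (Set.projIcc (t0 - τ) b hlow (s - τ))) -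
            f s (v (Set.projIcc (t0 - τ) b hlow s))
              (v (Set.projIcc (t0 - τ) b hlow (s - τ)))‖ ≤ 2 * L * ‖u - v‖ := by
        intro s hs
        rw [Set.uIoc_of_le h.le] at hs
        have hsmem : s ∈ Set.Icc t0 b := ⟨hs.1.le, hs.2.trans htb'⟩
        have h1 : |u (Set.projIcc (t0 - τ) b hlow s) - v (Set.projIcc (t0 - τ) b hlow s)| ≤
            ‖u - v‖ := by
          have := (u - v).norm_coe_le_norm (Set.projIcc (t0 - τ) b hlow s)
          simpa [Real.norm_eq_abs] using this
        have h2 : |u (Set.projIcc (t0 - τ) b hlow (s - τ)) -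
            v (Set.projIcc (t0 - τ) b hlow (s - τ))| ≤ ‖u - v‖ := by
          have := (u - v).norm_coe_le_norm (Set.projIcc (t0 - τ) b hlow (s - τ))
          simpa [Real.norm_eq_abs] using this
        rw [Real.norm_eq_abs]
        calc _ ≤ L * (|u (Set.projIcc (t0 - τ) b hlow s) - v (Set.projIcc (t0 - τ) b hlow s)| +
            |u (Set.projIcc (t0 - τ) b hlow (s - τ)) -
              v (Set.projIcc (t0 - τ) b hlow (s - τ))|) := hlip s hsmem _ _ _ _
          _ ≤ 2 * L * ‖u - v‖ := by nlinarith
      have := intervalIntegral.norm_integral_le_of_norm_le_const hbound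
      rw [Real.norm_eq_abs] at this ⊢
      have habs : |(t : ℝ) - t0| ≤ b - t0 := by
        rw [abs_of_nonneg (by linarith)]; linarith
      calc _ ≤ 2 * L * ‖u - v‖ * |(t : ℝ) - t0| := this
        _ ≤ q * ‖u - v‖ := by
            have h0 : (0:ℝ) ≤ ‖u - v‖ := norm_nonneg _
            rw [hqdef]
            nlinarith [mul_le_mul_of_nonneg_left habs
              (mul_nonneg (by positivity : (0:ℝ) ≤ 2 * L) h0)]
  intro n
  obtain ⟨h10, h11⟩ := hη1 n
  obtain ⟨h20, h21⟩ := hη2 n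
  have hX : (0:ℝ) ≤ ‖x n - xstar‖ := norm_nonneg _
  have hq1 : q < 1 := hsmall
  have hTx : ‖T (x n) - xstar‖ ≤ q * ‖x n - xstar‖ := by
    have := key (x n) xstar; rwa [hfix] at this
  have hzb : ‖z n - xstar‖ ≤ (1 - η2 n * (1 - q)) * ‖x n - xstar‖ := by
    have hzeq : z n - xstar = (1 - η2 n) • (x n - xstar) + η2 n • (T (x n) - xstar) := by
      rw [hz]; module
    rw [hzeq]
    calc _ ≤ ‖(1 - η2 n) • (x n - xstar)‖ + ‖η2 n • (T (x n) - xstar)‖ := norm_add_le _ _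
      _ = (1 - η2 n) * ‖x n - xstar‖ + η2 n * ‖T (x n) - xstar‖ := by
          have e1 := norm_smul (1 - η2 n) (x n - xstar)
          have e2 := norm_smul (η2 n) (T (x n) - xstar)
          rw [Real.norm_eq_abs, abs_of_nonneg (by linarith : (0:ℝ) ≤ 1 - η2 n)] at e1
          rw [Real.norm_eq_abs, abs_of_nonneg h20] at e2
          rw [e1, e2]
      _ ≤ (1 - η2 n * (1 - q)) * ‖x n - xstar‖ := by nlinarith
  have hTz : ‖T (z n) - xstar‖ ≤ q * ‖z n - xstar‖ := by
    have := key (z n) xstar; rwa [hfix] at this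
  have hyb : ‖y n - xstar‖ ≤ q * (1 - η1 n * η2 n * (1 - q)) * ‖x n - xstar‖ := by
    have hyeq : y n - xstar = (1 - η1 n) • (T (x n) - xstar) + η1 n • (T (z n) - xstar) := by
      rw [hy]; module
    rw [hyeq]
    calc _ ≤ ‖(1 - η1 n) • (T (x n) - xstar)‖ + ‖η1 n • (T (z n) - xstar)‖ := norm_add_le _ _
      _ = (1 - η1 n) * ‖T (x n) - xstar‖ + η1 n * ‖T (z n) - xstar‖ := by
          have e1 := norm_smul (1 - η1 n) (T (x n) - xstar)
          have e2 := norm_smul (η1 n) (T (z n) - xstar)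
          rw [Real.norm_eq_abs, abs_of_nonneg (by linarith : (0:ℝ) ≤ 1 - η1 n)] at e1
          rw [Real.norm_eq_abs, abs_of_nonneg h10] at e2
          rw [e1, e2]
      _ ≤ q * (1 - η1 n * η2 n * (1 - q)) * ‖x n - xstar‖ := by
          have hB : ‖T (z n) - xstar‖ ≤ q * ((1 - η2 n * (1 - q)) * ‖x n - xstar‖) :=
            hTz.trans (mul_le_mul_of_nonneg_left hzb hq0)
          nlinarith [mul_le_mul_of_nonneg_left hTx (by linarith : (0:ℝ) ≤ 1 - η1 n),
            mul_le_mul_of_nonneg_left hB h10]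
  have hfin : ‖x (n + 1) - xstar‖ ≤ q * ‖y n - xstar‖ := by
    rw [hxrec]
    have := key (y n) xstar; rwa [hfix] at this
  have hq2 : 4 * L ^ 2 * (b - t0) ^ 2 = q * q := by rw [hqdef]; ring
  calc ‖x (n + 1) - xstar‖ ≤ q * ‖y n - xstar‖ := hfin
    _ ≤ q * (q * (1 - η1 n * η2 n * (1 - q)) * ‖x n - xstar‖) := by
        exact mul_le_mul_of_nonneg_left hyb hq0
    _ = 4 * L ^ 2 * (b - t0) ^ 2 * (1 - η1 n * η2 n * (1 - 2 * L * (b - t0))) *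
        ‖x n - xstar‖ := by rw [hq2]; ring
end
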